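/- arXiv:1803.01133 — 7 statements merged into one kernel-verified Lean document; each statement's English description precedes it below -/
import Mathlib

section
/- Let T be a bounded operator on a complex Hilbert space and β_n(T) = ∑_{j=0}^{n} (-1)^{n-j} C(n,j) (T*)^j T^j. Then for all k, n ≥ 0, (T*)^k β_n(T) T^k = ∑_{j=0}^{k} C(k,j) β_{n+j}(T). -/
/-!
Write `L X = T* X T`. Since `L ^ j X = (T*) ^ j X T ^ j`, the binomial expansion of `(L - 1) ^ n`
gives `β_n(T) = (L - 1) ^ n 1`. Then `(T*) ^ k β_n(T) T ^ k = L ^ k (L - 1) ^ n 1`, and expanding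
`L ^ k = ((L - 1) + 1) ^ k` by the binomial theorem yields `∑ C(k, j) (L - 1) ^ (n + j) 1`.
-/

open ContinuousLinearMap

variable {H : Type*} [NormedAddCommGroup H] [InnerProductSpace ℂ H] [CompleteSpace H]

/-- `beta T n = ∑_{j=0}^n (-1)^{n-j} C(n,j) (T*)^j T^j`. -/
noncomputable def beta (T : H →L[ℂ] H) (n : ℕ) : H →L[ℂ] H :=
  ∑ j ∈ Finset.range (n + 1),
    ((-1 : ℂ) ^ (n - j) * (n.choose j : ℂ)) • ((ContinuousLinearMap.adjoint T) ^ j * T ^ j)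

open Finset

theorem add_one_pow_mul_pow {B : Type*} [Semiring B] (y : B) (k n : ℕ) :
    (y + 1) ^ k * y ^ n = ∑ j ∈ range (k + 1), k.choose j • y ^ (n + j) := by
  rw [(Commute.one_right y).add_pow, sum_mul]
  refine sum_congr rfl fun j _ => ?_
  rw [one_pow, mul_one, ← Nat.cast_comm, mul_assoc, ← pow_add, add_comm j, nsmul_eq_mul]

theorem sub_one_pow_eq_sum {R B : Type*} [CommRing R] [Ring B] [Algebra R B] (x : B) (n : ℕ) :
    (x - 1) ^ n = ∑ j ∈ range (n + 1), ((-1 : R) ^ (n - j) * n.choose j) • x ^ j := by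
  rw [sub_eq_add_neg, (Commute.neg_one_right x).add_pow]
  refine sum_congr rfl fun j _ => ?_
  rw [Algebra.smul_def, map_mul, map_pow, map_neg, map_one, map_natCast, mul_assoc]
  exact (((Commute.neg_one_left _).pow_left _).mul_left (Nat.cast_commute _ _)).eq.symm

theorem LinearMap.mulLeftRight_pow {R A : Type*} [CommSemiring R] [Semiring A] [Module R A]
    [SMulCommClass R A A] [IsScalarTower R A A] (a b : A) (j : ℕ) :
    mulLeftRight R (a, b) ^ j = mulLeftRight R (a ^ j, b ^ j) := by
  induction j with
  | zero => ext; simp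
  | succ j ih => ext x; simp [pow_succ', ih, mul_assoc, pow_mul_comm']

theorem beta_eq_mulLeftRight_sub_one_pow_apply_one (T : H →L[ℂ] H) (n : ℕ) :
    beta T n = ((LinearMap.mulLeftRight ℂ (adjoint T, T) - 1) ^ n) 1 := by
  simp [beta, sub_one_pow_eq_sum (R := ℂ), LinearMap.mulLeftRight_pow]

theorem adjoint_pow_beta_pow (T : H →L[ℂ] H) (k n : ℕ) :
    (ContinuousLinearMap.adjoint T) ^ k * beta T n * T ^ k
      = ∑ j ∈ Finset.range (k + 1), (k.choose j : ℂ) • beta T (n + j) := by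
  set L := LinearMap.mulLeftRight ℂ (adjoint T, T)
  calc adjoint T ^ k * beta T n * T ^ k = (L ^ k * (L - 1) ^ n) 1 := by
        rw [beta_eq_mulLeftRight_sub_one_pow_apply_one, Module.End.mul_apply,
          LinearMap.mulLeftRight_pow, LinearMap.mulLeftRight_apply]
    _ = ((L - 1 + 1) ^ k * (L - 1) ^ n) 1 := by rw [sub_add_cancel]
    _ = ∑ j ∈ range (k + 1), (k.choose j : ℂ) • beta T (n + j) := by
        rw [add_one_pow_mul_pow, LinearMap.sum_apply]
        simp only [LinearMap.smul_apply, ← Nat.cast_smul_eq_nsmul ℂ,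
          beta_eq_mulLeftRight_sub_one_pow_apply_one, L]
end

section
/- Let T be a bounded m-isometry on a complex Hilbert space (β_m(T) = 0). Then for every x ∈ H, the function k ↦ ‖T^k x‖² is a polynomial in k of degree at most m−1; in particular ‖T^k x‖² = ∑_{j=0}^{m-1} C(k,j) ⟨β_j(T) x, x⟩. -/
open ContinuousLinearMap

variable {H : Type*} [NormedAddCommGroup H] [InnerProductSpace ℂ H] [CompleteSpace H]

/-!
Let `Φ S = T† * S * T` act on `B(H)`. Then `T†ᵏ Tᵏ = Φᵏ 1` and `β n = (Φ - 1)ⁿ 1`, so expanding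
`Φᵏ = ((Φ - 1) + 1)ᵏ` by the binomial theorem gives `T†ᵏ Tᵏ = ∑ C(k, j) β j`, where all terms with
`j ≥ m` vanish because `(Φ - 1)ʲ 1 = (Φ - 1)ʲ⁻ᵐ (β m) = 0`. Pairing with `x` and using that
`k ↦ C(k, j)` is a polynomial of degree `j` gives the claim.
-/

open Finset

theorem sub_one_pow_eq_sum_smul {R A : Type*} [CommRing R] [Ring A] [Algebra R A] (a : A)
    (n : ℕ) : (a - 1) ^ n = ∑ j ∈ range (n + 1), ((-1 : R) ^ (n - j) * n.choose j) • a ^ j := by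
  rw [sub_eq_add_neg, (Commute.neg_one_right a).add_pow]
  refine sum_congr rfl fun j _ => ?_
  rw [Algebra.smul_def, map_mul, map_pow, map_neg, map_one, map_natCast, mul_assoc,
    ((Commute.neg_one_left _).pow_left _).mul_left (Nat.cast_commute _ _) |>.eq]

theorem Module.End.pow_apply_eq_sum_choose_smul {R M : Type*} [Semiring R] [AddCommGroup M]
    [Module R M] (f : Module.End R M) {m : ℕ} {v : M} (hv : ((f - 1) ^ m) v = 0) (k : ℕ) :
    (f ^ k) v = ∑ j ∈ range m, k.choose j • ((f - 1) ^ j) v := by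
  have binomial : (f ^ k) v = ∑ j ∈ range (k + 1), k.choose j • ((f - 1) ^ j) v := by
    conv_lhs => rw [← sub_add_cancel f 1, (Commute.one_right (f - 1)).add_pow k]
    simp [LinearMap.sum_apply]
  have vanish (j : ℕ) (hj : m ≤ j) : ((f - 1) ^ j) v = 0 := by
    rw [← Nat.sub_add_cancel hj, pow_add, Module.End.mul_apply, hv, map_zero]
  rw [binomial, sum_subset (range_subset_range.2 (Nat.le_add_right (k + 1) m)),
    ← sum_subset (range_subset_range.2 (Nat.le_add_left m (k + 1)))]
  · intro j _ hj
    rw [vanish j (not_lt.1 (mem_range.not.1 hj)), smul_zero]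
  · intro j _ hj
    rw [Nat.choose_eq_zero_of_lt (by simpa [Nat.lt_succ_iff] using hj), zero_smul]

theorem LinearMap.mulLeftRight_pow_apply {R A : Type*} [CommSemiring R] [Semiring A]
    [Algebra R A] (a b x : A) (n : ℕ) :
    (mulLeftRight R (a, b) ^ n) x = a ^ n * x * b ^ n := by
  induction n with
  | zero => simp
  | succ n ih =>
    rw [pow_succ', Module.End.mul_apply, ih, mulLeftRight_apply, pow_succ', pow_succ]
    noncomm_ring

theorem exists_polynomial_eval_eq_sum_choose_mul {K : Type*} [Field K] [CharZero K] (c : ℕ → K)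
    (m : ℕ) : ∃ p : Polynomial K, p.natDegree ≤ m - 1 ∧
      ∀ k : ℕ, p.eval (k : K) = ∑ j ∈ range m, (k.choose j : K) * c j := by
  -- `k.choose j = (descPochhammer j).eval k / j!`
  refine ⟨∑ j ∈ range m, (c j / j.factorial) • descPochhammer K j, ?_, fun k => ?_⟩
  · refine Polynomial.natDegree_sum_le_of_forall_le _ _ fun j hj => ?_
    refine (Polynomial.natDegree_smul_le _ _).trans ?_
    rw [descPochhammer_natDegree]
    have := mem_range.1 hj
    omega
  · rw [Polynomial.eval_finsetSum]
    refine sum_congr rfl fun j _ => ?_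
    rw [Polynomial.eval_smul, smul_eq_mul, descPochhammer_eval_eq_descFactorial,
      Nat.descFactorial_eq_factorial_mul_choose]
    have : (j.factorial : K) ≠ 0 := Nat.cast_ne_zero.2 j.factorial_ne_zero
    push_cast
    field_simp

section MIsometry

variable (T : H →L[ℂ] H)

theorem beta_eq_sub_one_pow_apply (n : ℕ) :
    beta T n = ((LinearMap.mulLeftRight ℂ (adjoint T, T) - 1) ^ n) 1 := by
  simp [sub_one_pow_eq_sum_smul (R := ℂ), LinearMap.sum_apply, LinearMap.mulLeftRight_pow_apply,
    beta]

theorem adjoint_pow_mul_pow_eq_sum_beta {m : ℕ} (hT : beta T m = 0) (k : ℕ) :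
    adjoint T ^ k * T ^ k = ∑ j ∈ range m, (k.choose j : ℂ) • beta T j := by
  have := Module.End.pow_apply_eq_sum_choose_smul (LinearMap.mulLeftRight ℂ (adjoint T, T))
    (v := 1) (by rw [← beta_eq_sub_one_pow_apply, hT]) k
  simpa [LinearMap.mulLeftRight_pow_apply, ← beta_eq_sub_one_pow_apply, Nat.cast_smul_eq_nsmul]
    using this

theorem norm_pow_apply_sq_eq_sum_beta {m : ℕ} (hT : beta T m = 0) (x : H) (k : ℕ) :
    ‖(T ^ k) x‖ ^ 2 = ∑ j ∈ range m, (k.choose j : ℝ) * (inner ℂ x (beta T j x)).re := by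
  rw [apply_norm_sq_eq_inner_adjoint_right, ← ContinuousLinearMap.mul_def, ← star_eq_adjoint,
    star_pow, star_eq_adjoint, adjoint_pow_mul_pow_eq_sum_beta T hT, _root_.sum_apply, inner_sum,
    map_sum]
  simp [inner_smul_right]

end MIsometry

theorem norm_pow_apply_polynomial_general (T : H →L[ℂ] H) (m : ℕ)
    (hT : beta T m = 0) (x : H) :
    (∀ k : ℕ, ‖(T ^ k) x‖ ^ 2
        = ∑ j ∈ Finset.range m, (k.choose j : ℝ) * (inner ℂ x ((beta T j) x) : ℂ).re) ∧
    ∃ p : Polynomial ℝ, p.natDegree ≤ m - 1 ∧ ∀ k : ℕ, ‖(T ^ k) x‖ ^ 2 = p.eval (k : ℝ) := by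
  obtain ⟨p, hdeg, hp⟩ :=
    exists_polynomial_eval_eq_sum_choose_mul (fun j => (inner ℂ x (beta T j x)).re) m
  exact ⟨norm_pow_apply_sq_eq_sum_beta T hT x,
    p, hdeg, fun k => (norm_pow_apply_sq_eq_sum_beta T hT x k).trans (hp k).symm⟩

theorem norm_pow_apply_polynomial (T : H →L[ℂ] H) (m : ℕ) (hm : 1 ≤ m)
    (hT : beta T m = 0) (x : H) :
    (∀ k : ℕ, ‖(T ^ k) x‖ ^ 2
        = ∑ j ∈ Finset.range m, (k.choose j : ℝ) * (inner ℂ x ((beta T j) x) : ℂ).re) ∧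
    ∃ p : Polynomial ℝ, p.natDegree ≤ m - 1 ∧ ∀ k : ℕ, ‖(T ^ k) x‖ ^ 2 = p.eval (k : ℝ) :=
  norm_pow_apply_polynomial_general T m hT x
end

section
/- Let T be a bounded m-isometry on a complex Hilbert space H. Then the operator β_{m−1}(T) is positive semidefinite, i.e. ⟨β_{m−1}(T) x, x⟩ ≥ 0 for all x ∈ H. -/
/-!
With `a n = ‖Tⁿ x‖²`, the quadratic form of `β_n(T)` at `Tⁱ x` is the forward difference
`Δⁿ a (i)`. So `β_m(T) = 0` makes `Δ^{m-1} a` constant; were that constant negative, every lower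
difference, and finally `a` itself, would tend to `-∞`, which is absurd since `a ≥ 0`.
-/

open ContinuousLinearMap

variable {H : Type*} [NormedAddCommGroup H] [InnerProductSpace ℂ H] [CompleteSpace H]

open fwdDiff Filter

theorem eq_apply_zero_of_fwdDiff_eq_zero {G : Type*} [AddCommGroup G] {g : ℕ → G}
    (h : Δ_[1] g = 0) (n : ℕ) : g n = g 0 := by
  induction n with
  | zero => rfl
  | succ n ih => rw [← ih, ← sub_eq_zero]; exact congr_fun h n

theorem tendsto_atBot_of_eventually_fwdDiff_le {f : ℕ → ℝ} {ε : ℝ} (hε : 0 < ε)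
    (h : ∀ᶠ n in atTop, Δ_[1] f n ≤ -ε) : Tendsto f atTop atBot := by
  obtain ⟨N, hN⟩ := eventually_atTop.mp h
  have hle : ∀ j : ℕ, f (j + N) ≤ f N - j * ε := by
    intro j
    induction j with
    | zero => simp
    | succ j ih =>
      have hstep : f (j + N + 1) - f (j + N) ≤ -ε := hN (j + N) (by omega)
      rw [Nat.add_right_comm]
      push_cast
      linarith
  rw [← tendsto_add_atTop_iff_nat N]
  exact tendsto_atBot_mono hle <| tendsto_atBot_add_const_left _ _ <|
    tendsto_neg_atTop_atBot.comp (tendsto_natCast_atTop_atTop.atTop_mul_const hε)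

theorem exists_eventually_le_neg_of_fwdDiff_iter (k : ℕ) {f : ℕ → ℝ}
    (h : ∃ ε > 0, ∀ᶠ n in atTop, (Δ_[1])^[k] f n ≤ -ε) :
    ∃ δ > 0, ∀ᶠ n in atTop, f n ≤ -δ := by
  induction k generalizing f with
  | zero => exact h
  | succ k ih =>
    obtain ⟨ε, hε, hf⟩ := ih (f := Δ_[1] f) h
    exact ⟨1, one_pos, (tendsto_atBot_of_eventually_fwdDiff_le hε hf).eventually_le_atBot (-1)⟩

theorem fwdDiff_iter_nonneg_of_fwdDiff_iter_succ_eq_zero {a : ℕ → ℝ} (ha : ∀ n, 0 ≤ a n)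
    {k : ℕ} (h : (Δ_[1])^[k + 1] a = 0) (n : ℕ) : 0 ≤ (Δ_[1])^[k] a n := by
  have hconst := eq_apply_zero_of_fwdDiff_eq_zero (g := (Δ_[1])^[k] a)
    (by rwa [Function.iterate_succ_apply'] at h)
  rw [hconst]
  by_contra! hneg
  obtain ⟨δ, hδ, hev⟩ := exists_eventually_le_neg_of_fwdDiff_iter k
    ⟨_, neg_pos.mpr hneg, Eventually.of_forall fun n => (hconst n).trans_le (neg_neg _).ge⟩
  obtain ⟨n, hn⟩ := hev.exists
  linarith [ha n]

theorem inner_beta_apply_self (T : H →L[ℂ] H) (n : ℕ) (x : H) :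
    inner ℂ x (beta T n x) = (((Δ_[1])^[n] (fun k => ‖(T ^ k) x‖ ^ 2) 0 : ℝ) : ℂ) := by
  rw [fwdDiff_iter_eq_sum_shift, beta, sum_apply, inner_sum, Complex.ofReal_sum]
  refine Finset.sum_congr rfl fun j _ => ?_
  rw [smul_apply, inner_smul_right, mul_apply_eq_comp, ← star_eq_adjoint, ← star_pow,
    star_eq_adjoint, adjoint_inner_right, inner_self_eq_norm_sq_to_K]
  simp

theorem fwdDiff_iter_norm_sq_pow_apply_eq_zero {T : H →L[ℂ] H} {m : ℕ} (hT : beta T m = 0)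
    (x : H) : (Δ_[1])^[m] (fun k => ‖(T ^ k) x‖ ^ 2) = 0 := by
  funext i
  have h := inner_beta_apply_self T m ((T ^ i) x)
  have hshift : (fun k => ‖(T ^ k) ((T ^ i) x)‖ ^ 2) = fun k => ‖(T ^ (k + i)) x‖ ^ 2 := by
    simp only [pow_add, mul_apply_eq_comp]
  rw [hT, zero_apply, inner_zero_right, hshift,
    fwdDiff_iter_comp_add 1 (fun k => ‖(T ^ k) x‖ ^ 2), zero_add] at h
  exact_mod_cast h.symm

theorem beta_pred_positive (T : H →L[ℂ] H) (m : ℕ) (hm : 1 ≤ m)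
    (hT : beta T m = 0) (x : H) :
    0 ≤ (inner ℂ x ((beta T (m - 1)) x) : ℂ).re ∧ (inner ℂ x ((beta T (m - 1)) x) : ℂ).im = 0 := by
  obtain ⟨k, rfl⟩ := Nat.exists_eq_add_of_le' hm
  rw [Nat.add_sub_cancel, inner_beta_apply_self, Complex.ofReal_re, Complex.ofReal_im]
  exact ⟨fwdDiff_iter_nonneg_of_fwdDiff_iter_succ_eq_zero (fun _ => sq_nonneg _)
    (fwdDiff_iter_norm_sq_pow_apply_eq_zero hT x) 0, rfl⟩
end

section
/- For an analytic polynomial f(z) = ∑_{k≥0} a_k z^k, define D_{λ,n}(f) = ∑_{k≥0} C(k,n) |a_k|². Then D_{λ,n}(f') is comparable to |a_{n+1}|² + D_{λ,n+2}(f), and also comparable to D_{λ,n+1}(f) + D_{λ,n+2}(f), with comparability constants depending only on n. Specifically D_{λ,n}(f') = ∑_{k≥n} C(k,n)(k+1)² |a_{k+1}|². -/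
/-!
Shifting the index, every quantity in the statement is a weighted sum `∑ w_k ‖a (k+1)‖²`, with
weights `C(k,n) (k+1)²` for `D_{λ,n}(f')`, `C(k+1,m)` for `D_{λ,m}(f)` and `[k = n]` for
`‖a_{n+1}‖²`, so it suffices to compare weights termwise. Combining
`(n+1) C(k+1,n+1) = (k+1) C(k,n)` with `(n+2) C(k+1,n+2) = (k-n) C(k+1,n+1)` gives
`C(k,n) (k+1)² = (n+1) ((n+1) C(k+1,n+1) + (n+2) C(k+1,n+2))`, whence
`D_{λ,n}(f') ≍ D_{λ,n+1}(f) + D_{λ,n+2}(f)`. The second relation also shows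
`C(k+1,n+1) ≤ (n+2) C(k+1,n+2)` for `k > n`, so only the single term `‖a_{n+1}‖²` of
`D_{λ,n+1}(f)` is not controlled by `D_{λ,n+2}(f)`.
-/

/-- `D_{λ,n}(f) = ∑_k C(k,n) |a_k|²` for a coefficient sequence supported in `Finset.range M`. -/
noncomputable def DL (n : ℕ) (a : ℕ → ℂ) (M : ℕ) : ℝ :=
  ∑ k ∈ Finset.range M, (k.choose n : ℝ) * ‖a k‖ ^ 2

open Finset

namespace Nat

theorem choose_mul_add_one_sq (n k : ℕ) :
    k.choose n * (k + 1) ^ 2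
      = (n + 1) * ((n + 1) * (k + 1).choose (n + 1) + (n + 2) * (k + 1).choose (n + 2)) := by
  rcases Nat.lt_or_ge k n with hkn | hkn
  · simp [choose_eq_zero_of_lt hkn, choose_eq_zero_of_lt (by omega : k + 1 < n + 1),
      choose_eq_zero_of_lt (by omega : k + 1 < n + 2)]
  · obtain ⟨t, rfl⟩ : ∃ t, k = n + t := ⟨k - n, by omega⟩
    have hA := add_one_mul_choose_eq (n + t) n
    have hB := choose_succ_right_eq (n + t + 1) (n + 1)
    rw [show n + t + 1 - (n + 1) = t by omega] at hB
    zify at hA hB ⊢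
    linear_combination ((n : ℤ) + t + 1) * hA - ((n : ℤ) + 1) * hB

theorem choose_mul_add_one_sq_le (n k : ℕ) :
    k.choose n * (k + 1) ^ 2 ≤ (n + 2) ^ 2 * ((k + 1).choose (n + 1) + (k + 1).choose (n + 2)) := by
  rw [choose_mul_add_one_sq]
  nlinarith

theorem choose_add_choose_le_choose_mul_add_one_sq (n k : ℕ) :
    (k + 1).choose (n + 1) + (k + 1).choose (n + 2) ≤ 2 * (k.choose n * (k + 1) ^ 2) := by
  rw [choose_mul_add_one_sq]
  nlinarith [Nat.zero_le (n * (k + 1).choose (n + 1)), Nat.zero_le (n * (k + 1).choose (n + 2))]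

theorem choose_succ_le_mul_ite_add_choose (n k : ℕ) :
    (k + 1).choose (n + 1) ≤ (n + 2) * ((if k = n then 1 else 0) + (k + 1).choose (n + 2)) := by
  rcases lt_trichotomy k n with hkn | rfl | hkn
  · simp [choose_eq_zero_of_lt (by omega : k + 1 < n + 1)]
  · simp
  · have hB := choose_succ_right_eq (k + 1) (n + 1)
    rw [if_neg hkn.ne']
    nlinarith [Nat.mul_le_mul_left ((k + 1).choose (n + 1)) (by omega : 1 ≤ k + 1 - (n + 1))]

theorem ite_le_choose_succ (n k : ℕ) : (if k = n then 1 else 0) ≤ (k + 1).choose (n + 1) := by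
  split_ifs with hk
  · simp [hk]
  · exact zero_le _

end Nat

theorem Finset.sum_mul_le_mul_sum_of_le {ι : Type*} (s : Finset ι) {u v x : ι → ℝ} {C : ℝ}
    (hx : ∀ i ∈ s, 0 ≤ x i) (huv : ∀ i ∈ s, u i ≤ C * v i) :
    ∑ i ∈ s, u i * x i ≤ C * ∑ i ∈ s, v i * x i := by
  rw [mul_sum]
  refine sum_le_sum fun i hi => ?_
  rw [← mul_assoc]
  exact mul_le_mul_of_nonneg_right (huv i hi) (hx i hi)

theorem DL_deriv_eq (n : ℕ) (a : ℕ → ℂ) (M : ℕ) :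
    DL n (fun k => ((k : ℂ) + 1) * a (k + 1)) M
      = ∑ k ∈ range M, (k.choose n : ℝ) * ((k : ℝ) + 1) ^ 2 * ‖a (k + 1)‖ ^ 2 := by
  refine sum_congr rfl fun k _ => ?_
  rw [norm_mul, mul_pow, ← mul_assoc, show (k : ℂ) + 1 = ((k + 1 : ℕ) : ℂ) by push_cast; rfl,
    Complex.norm_natCast]
  push_cast
  rfl

section

variable {a : ℕ → ℂ} {M : ℕ}

theorem DL_eq_sum_shift {n : ℕ} (hn : 0 < n) (ha : ∀ k, M ≤ k → a k = 0) :
    DL n a M = ∑ k ∈ range M, ((k + 1).choose n : ℝ) * ‖a (k + 1)‖ ^ 2 := by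
  calc DL n a M = ∑ k ∈ range (M + 1), (k.choose n : ℝ) * ‖a k‖ ^ 2 := by
        simp [DL, sum_range_succ, ha M le_rfl]
    _ = _ := by simp [sum_range_succ', Nat.choose_eq_zero_of_lt hn]

theorem norm_sq_eq_sum_ite (n : ℕ) (ha : ∀ k, M ≤ k → a k = 0) :
    ‖a (n + 1)‖ ^ 2 = ∑ k ∈ range M, (if k = n then 1 else 0) * ‖a (k + 1)‖ ^ 2 := by
  simp only [boole_mul, sum_ite_eq', mem_range]
  split_ifs with hn
  · rfl
  · simp [ha (n + 1) (by omega)]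

theorem DL_deriv_le (n : ℕ) (ha : ∀ k, M ≤ k → a k = 0) :
    DL n (fun k => ((k : ℂ) + 1) * a (k + 1)) M
      ≤ ((n : ℝ) + 2) ^ 2 * (DL (n + 1) a M + DL (n + 2) a M) := by
  rw [DL_deriv_eq, DL_eq_sum_shift (by omega) ha, DL_eq_sum_shift (by omega) ha,
    ← sum_add_distrib]
  simp_rw [← add_mul]
  refine sum_mul_le_mul_sum_of_le _ (fun k _ => by positivity) fun k _ => ?_
  exact_mod_cast Nat.choose_mul_add_one_sq_le n k

theorem DL_add_le_DL_deriv (n : ℕ) (ha : ∀ k, M ≤ k → a k = 0) :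
    DL (n + 1) a M + DL (n + 2) a M
      ≤ 2 * DL n (fun k => ((k : ℂ) + 1) * a (k + 1)) M := by
  rw [DL_deriv_eq, DL_eq_sum_shift (by omega) ha, DL_eq_sum_shift (by omega) ha,
    ← sum_add_distrib]
  simp_rw [← add_mul]
  refine sum_mul_le_mul_sum_of_le _ (fun k _ => by positivity) fun k _ => ?_
  exact_mod_cast Nat.choose_add_choose_le_choose_mul_add_one_sq n k

theorem norm_sq_le_DL_succ (n : ℕ) (ha : ∀ k, M ≤ k → a k = 0) :
    ‖a (n + 1)‖ ^ 2 ≤ DL (n + 1) a M := by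
  rw [norm_sq_eq_sum_ite n ha, DL_eq_sum_shift (by omega) ha]
  refine sum_le_sum fun k _ => mul_le_mul_of_nonneg_right ?_ (by positivity)
  exact_mod_cast Nat.ite_le_choose_succ n k

theorem DL_succ_le (n : ℕ) (ha : ∀ k, M ≤ k → a k = 0) :
    DL (n + 1) a M ≤ ((n : ℝ) + 2) * (‖a (n + 1)‖ ^ 2 + DL (n + 2) a M) := by
  rw [norm_sq_eq_sum_ite n ha, DL_eq_sum_shift (by omega) ha, DL_eq_sum_shift (by omega) ha,
    ← sum_add_distrib]
  simp_rw [← add_mul]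
  refine sum_mul_le_mul_sum_of_le _ (fun k _ => by positivity) fun k _ => ?_
  exact_mod_cast Nat.choose_succ_le_mul_ite_add_choose n k

end

theorem littlewood_paley_comparability (n : ℕ) :
    ∃ c₁ C₁ c₂ C₂ : ℝ, 0 < c₁ ∧ 0 < C₁ ∧ 0 < c₂ ∧ 0 < C₂ ∧
      ∀ (a : ℕ → ℂ) (M : ℕ), (∀ k, M ≤ k → a k = 0) →
        (DL n (fun k => ((k : ℂ) + 1) * a (k + 1)) M
            = ∑ k ∈ Finset.range M,
                (k.choose n : ℝ) * ((k : ℝ) + 1) ^ 2 * ‖a (k + 1)‖ ^ 2) ∧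
        c₁ * (‖a (n + 1)‖ ^ 2 + DL (n + 2) a M)
            ≤ DL n (fun k => ((k : ℂ) + 1) * a (k + 1)) M ∧
        DL n (fun k => ((k : ℂ) + 1) * a (k + 1)) M
            ≤ C₁ * (‖a (n + 1)‖ ^ 2 + DL (n + 2) a M) ∧
        c₂ * (DL (n + 1) a M + DL (n + 2) a M)
            ≤ DL n (fun k => ((k : ℂ) + 1) * a (k + 1)) M ∧
        DL n (fun k => ((k : ℂ) + 1) * a (k + 1)) M
            ≤ C₂ * (DL (n + 1) a M + DL (n + 2) a M) := by
  refine ⟨1 / 2, ((n : ℝ) + 2) ^ 2 * ((n : ℝ) + 3), 1 / 2, ((n : ℝ) + 2) ^ 2,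
    by norm_num, by positivity, by norm_num, by positivity, fun a M ha => ?_⟩
  have hupper := DL_deriv_le n ha
  have hlower := DL_add_le_DL_deriv n ha
  have hnorm := norm_sq_le_DL_succ n ha
  have hsucc := DL_succ_le n ha
  have hnorm_nonneg : 0 ≤ ‖a (n + 1)‖ ^ 2 := by positivity
  refine ⟨DL_deriv_eq n a M, by linarith, ?_, by linarith, hupper⟩
  calc DL n (fun k => ((k : ℂ) + 1) * a (k + 1)) M
      ≤ ((n : ℝ) + 2) ^ 2 * (DL (n + 1) a M + DL (n + 2) a M) := hupper
    _ ≤ ((n : ℝ) + 2) ^ 2 * (((n : ℝ) + 2) * (‖a (n + 1)‖ ^ 2 + DL (n + 2) a M)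
          + (‖a (n + 1)‖ ^ 2 + DL (n + 2) a M)) := by gcongr; linarith
    _ = ((n : ℝ) + 2) ^ 2 * ((n : ℝ) + 3) * (‖a (n + 1)‖ ^ 2 + DL (n + 2) a M) := by ring
end

section
/- For every r ∈ [0, 1), the sum ∑_{k,l=1}^{∞} r^{k+l} / max(k,l) equals log(1/(1−r²)) + (2r/(1−r)) log(1/(1−r)) − (2/(1−r)) log(1/(1−r²)), and this quantity is bounded above by a constant multiple of r²/(1−r²) uniformly in r ∈ [0,1). -/
/-!
Group the terms by the shell `max k l = m`, on which the denominator is constant. The square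
`k, l ≤ m` carries `∑ r ^ (k + l) = G m ^ 2` with `G m = r + ⋯ + r ^ m`, so the shell contributes
`(G m ^ 2 - G (m - 1) ^ 2) / m`, an explicit combination of `r ^ m / m` and `r ^ (2 m) / m`.
Summing the two logarithmic series gives `log (1 - r) + (1 + r) / (1 - r) * log (1 + r)`, and
`log (1 ± r) ≤ ± r` bounds this by `2 r ^ 2 / (1 - r) ≤ 4 r ^ 2 / (1 - r ^ 2)`.
-/

open Real Finset Filter Topology

theorem Finset.tendsto_range_prod_range_atTop :
    Tendsto (fun N => range N ×ˢ range N) atTop atTop :=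
  tendsto_atTop_finset_of_monotone (fun _ _ h => product_subset_product (range_mono h)
    (range_mono h)) fun p => ⟨max p.1 p.2 + 1, by simp⟩

theorem HasSum.tendsto_sum_range_prod_range {α : Type*} [AddCommMonoid α] [TopologicalSpace α]
    {f : ℕ × ℕ → α} {a : α} (h : HasSum f a) :
    Tendsto (fun N => ∑ p ∈ range N ×ˢ range N, f p) atTop (𝓝 a) :=
  h.comp tendsto_range_prod_range_atTop

theorem max_add_one_eq_of_mem_range_prod_range_sdiff {K : Type*} [Field K] [LinearOrder K]
    [IsStrictOrderedRing K] {m : ℕ} {p : ℕ × ℕ}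
    (hp : p ∈ range (m + 1) ×ˢ range (m + 1) \ range m ×ˢ range m) :
    max ((p.1 : K) + 1) (p.2 + 1) = m + 1 := by
  simp only [Finset.mem_sdiff, mem_product, mem_range, Order.lt_add_one_iff, not_and, not_lt] at hp
  have h : max p.1 p.2 = m := by omega
  rw [max_add_add_right]
  exact_mod_cast congrArg (fun n : ℕ => (n : K) + 1) h

theorem sum_range_prod_range_div_max {K : Type*} [Field K] [LinearOrder K]
    [IsStrictOrderedRing K] (g : ℕ × ℕ → K) (N : ℕ) :
    ∑ p ∈ range N ×ˢ range N, g p / max ((p.1 : K) + 1) (p.2 + 1) =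
      ∑ m ∈ range N, (∑ p ∈ range (m + 1) ×ˢ range (m + 1), g p
        - ∑ p ∈ range m ×ˢ range m, g p) / (m + 1) := by
  induction N with
  | zero => simp
  | succ N ih =>
    have hsub : range N ×ˢ range N ⊆ range (N + 1) ×ˢ range (N + 1) :=
      product_subset_product (range_subset_range.2 N.le_succ) (range_subset_range.2 N.le_succ)
    rw [sum_range_succ, ← ih, ← sum_sdiff hsub, ← sum_sdiff hsub (f := g), add_sub_cancel_right,
      sum_div, add_comm]
    congr 1
    refine sum_congr rfl fun p hp => ?_
    rw [max_add_one_eq_of_mem_range_prod_range_sdiff hp]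

theorem sum_range_prod_range_pow_eq_sq {R : Type*} [CommSemiring R] (r : R) (m : ℕ) :
    ∑ p ∈ range m ×ˢ range m, r ^ (p.1 + 1 + (p.2 + 1)) = (∑ k ∈ range m, r ^ (k + 1)) ^ 2 := by
  simp only [sum_product, pow_add _ (_ + 1), sq, sum_mul_sum]

theorem sum_range_pow_succ_eq {K : Type*} [Field K] {r : K} (hr : r ≠ 1) (m : ℕ) :
    ∑ k ∈ range m, r ^ (k + 1) = r * (1 - r ^ m) / (1 - r) := by
  have h : 1 - r ≠ 0 := sub_ne_zero.2 hr.symm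
  rw [sum_congr rfl fun k _ => pow_succ' r k, ← mul_sum, geom_sum_eq hr]
  field_simp
  ring

theorem sq_sum_range_pow_succ_sub_sq_div {K : Type*} [Field K] {r : K} (hr : r ≠ 1) (m : ℕ) :
    ((∑ k ∈ range (m + 1), r ^ (k + 1)) ^ 2 - (∑ k ∈ range m, r ^ (k + 1)) ^ 2) / (m + 1) =
      2 * r / (1 - r) * (r ^ (m + 1) / (m + 1))
        - (1 + r) / (1 - r) * ((r ^ 2) ^ (m + 1) / (m + 1)) := by
  have h : 1 - r ≠ 0 := sub_ne_zero.2 hr.symm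
  rw [sum_range_pow_succ_eq hr, sum_range_pow_succ_eq hr]
  field_simp
  ring

theorem summable_pow_div_max {r : ℝ} (hr : |r| < 1) :
    Summable fun p : ℕ × ℕ => r ^ (p.1 + 1 + (p.2 + 1)) / max ((p.1 : ℝ) + 1) (p.2 + 1) := by
  have hgeom : Summable fun n : ℕ => |r| ^ (n + 1) :=
    (summable_geometric_of_lt_one (abs_nonneg r) hr).comp_injective (add_left_injective 1)
  refine Summable.of_norm_bounded
    (hgeom.mul_of_nonneg hgeom (fun n => by positivity) (fun n => by positivity)) fun p => ?_
  rw [norm_div, norm_pow, Real.norm_eq_abs, ← pow_add]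
  exact div_le_self (by positivity) ((le_abs_self _).trans' (le_max_of_le_left (by simp)))

theorem tsum_pow_div_max {r : ℝ} (hr : |r| < 1) :
    ∑' p : ℕ × ℕ, r ^ (p.1 + 1 + (p.2 + 1)) / max ((p.1 : ℝ) + 1) (p.2 + 1) =
      log (1 - r) + (1 + r) / (1 - r) * log (1 + r) := by
  have hr₂ : |r ^ 2| < 1 := by rw [abs_pow]; exact pow_lt_one₀ (abs_nonneg r) hr two_ne_zero
  have hshells := ((hasSum_pow_div_log_of_abs_lt_one hr).mul_left (2 * r / (1 - r))).sub
    ((hasSum_pow_div_log_of_abs_lt_one hr₂).mul_left ((1 + r) / (1 - r)))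
  refine tendsto_nhds_unique (summable_pow_div_max hr).hasSum.tendsto_sum_range_prod_range ?_
  obtain ⟨hr₀, hr₁⟩ := abs_lt.1 hr
  simp only [sum_range_prod_range_div_max, sum_range_prod_range_pow_eq_sq,
    sq_sum_range_pow_succ_sub_sq_div hr₁.ne]
  convert hshells.tendsto_sum_nat using 2
  have h₁ : 1 - r ≠ 0 := by linarith
  rw [show 1 - r ^ 2 = (1 - r) * (1 + r) by ring, log_mul h₁ (by linarith)]
  field_simp
  ring

section

variable {r : ℝ} (hr₀ : -1 < r) (hr₁ : r < 1)
include hr₀ hr₁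

theorem log_one_sub_add_mul_log_one_add_eq :
    log (1 - r) + (1 + r) / (1 - r) * log (1 + r) =
      log (1 / (1 - r ^ 2)) + 2 * r / (1 - r) * log (1 / (1 - r))
        - 2 / (1 - r) * log (1 / (1 - r ^ 2)) := by
  have h₁ : 1 - r ≠ 0 := by linarith
  rw [one_div, one_div, log_inv, log_inv, show 1 - r ^ 2 = (1 - r) * (1 + r) by ring,
    log_mul h₁ (by linarith)]
  field_simp
  ring

theorem log_one_sub_add_mul_log_one_add_le :
    log (1 - r) + (1 + r) / (1 - r) * log (1 + r) ≤ 4 * (r ^ 2 / (1 - r ^ 2)) := by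
  have h₁ : 0 < 1 - r := by linarith
  have h₂ : 0 < 1 + r := by linarith
  calc log (1 - r) + (1 + r) / (1 - r) * log (1 + r)
      ≤ -r + (1 + r) / (1 - r) * r := by
        gcongr
        · linarith [log_le_sub_one_of_pos h₁]
        · linarith [log_le_sub_one_of_pos h₂]
    _ = 2 * r ^ 2 * (1 + r) / (1 - r ^ 2) := by
        rw [show 1 - r ^ 2 = (1 - r) * (1 + r) by ring]
        field_simp
        ring
    _ ≤ 4 * r ^ 2 / (1 - r ^ 2) := by
        gcongr ?_ / _
        · nlinarith
        · nlinarith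
    _ = 4 * (r ^ 2 / (1 - r ^ 2)) := mul_div_assoc _ _ _

end

theorem double_log_sum :
    ∃ C : ℝ, 0 < C ∧ ∀ r : ℝ, 0 ≤ r → r < 1 →
      (∑' p : ℕ × ℕ, r ^ (p.1 + 1 + (p.2 + 1)) / (max (p.1 + 1) (p.2 + 1) : ℝ))
          = Real.log (1 / (1 - r ^ 2)) + (2 * r / (1 - r)) * Real.log (1 / (1 - r))
            - (2 / (1 - r)) * Real.log (1 / (1 - r ^ 2)) ∧
      (∑' p : ℕ × ℕ, r ^ (p.1 + 1 + (p.2 + 1)) / (max (p.1 + 1) (p.2 + 1) : ℝ))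
          ≤ C * (r ^ 2 / (1 - r ^ 2)) := by
  refine ⟨4, four_pos, fun r hr₀ hr₁ => ?_⟩
  have hr₀' : -1 < r := by linarith
  rw [tsum_pow_div_max (abs_lt.2 ⟨hr₀', hr₁⟩)]
  exact ⟨log_one_sub_add_mul_log_one_add_eq hr₀' hr₁, log_one_sub_add_mul_log_one_add_le hr₀' hr₁⟩
end

section
/- Let μ be a finite positive Borel measure on the unit circle 𝕋 and let P_μ(z) = ∫_𝕋 (1−|z|²)/|ζ−z|² dμ(ζ) be its Poisson extension to the open unit disc 𝔻. Then the measure ν with dν = P_μ dA (A area measure on 𝔻) is a Carleson measure: sup_{w ∈ 𝔻} ∫_𝔻 (1−|w|²)/|1−conj(w)z|² P_μ(z) dA(z) ≤ C μ(𝕋) for an absolute constant C. -/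
open MeasureTheory

/-- The Poisson extension of a measure `μ` (carried on the unit circle) to the unit disc. -/
noncomputable def PoissonExt (μ : Measure ℂ) (z : ℂ) : ℝ :=
  ∫ ζ, (1 - ‖z‖ ^ 2) / ‖ζ - z‖ ^ 2 ∂μ

/-!
By Tonelli it suffices to bound `∫_𝔻 k_w(z) P(ζ, z) dA(z)` uniformly in `w ∈ 𝔻` and `ζ ∈ 𝕋`,
where `k_w(z) = (1 - |w|²) / |1 - w̄ z|²` and `P(ζ, z) = (1 - |z|²) / |ζ - z|²`. Let `a ∈ 𝕋` point
in the direction of `w` and `l = 1 - |w|`. On the closed disc `|1 - w̄ z| ≥ (|z - a| + l) / 5` and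
`1 - |z|² ≤ 2 |ζ - z|`, so the integrand is at most `100 l / ((|z - a| + l)² |z - ζ|)`.
Near `ζ`, i.e. for `|z - ζ| < |ζ - a| / 2`, this is at most `50 / (|ζ - a| |z - ζ|)`, whose integral
over that disc is `50π`. Elsewhere `|z - a| ≤ 3 |z - ζ|`, and `l / ((|z - a| + l)² |z - a|)`
integrates to `2π` over the plane in polar coordinates around `a`.
-/

open Set Metric Real ComplexConjugate

theorem lintegral_comp_norm_sub {f : ℝ → ENNReal} (hf : Measurable f) (c : ℂ) :
    ∫⁻ z, f ‖z - c‖ = ENNReal.ofReal (2 * π) * ∫⁻ r in Ioi 0, ENNReal.ofReal r * f r := by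
  have h_target : EqOn (fun p : ℝ × ℝ => ENNReal.ofReal p.1 • f ‖Complex.polarCoord.symm p‖)
      (fun p => ENNReal.ofReal p.1 * f p.1 * 1) polarCoord.target := by
    rintro p ⟨hp : 0 < p.1, -⟩
    simp [abs_of_pos hp]
  rw [lintegral_sub_right_eq_self (fun z => f ‖z‖) c, ← Complex.lintegral_comp_polarCoord_symm,
    setLIntegral_congr_fun polarCoord.open_target.measurableSet h_target,
    polarCoord_target, Measure.volume_eq_prod, ← Measure.prod_restrict,
    lintegral_prod_mul (f := fun r => ENNReal.ofReal r * f r) (g := fun _ => 1) (by fun_prop)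
      aemeasurable_const, setLIntegral_const, one_mul, Real.volume_Ioo, mul_comm]
  ring_nf

theorem lintegral_ball_inv_norm_sub (c : ℂ) (R : ℝ) :
    ∫⁻ z in ball c R, ENNReal.ofReal ‖z - c‖⁻¹ = ENNReal.ofReal (2 * π * R) := by
  have h_polar := lintegral_comp_norm_sub (f := (Iio R).indicator fun r => ENNReal.ofReal r⁻¹)
    ((measurable_id.inv.ennreal_ofReal).indicator measurableSet_Iio) c
  have h_radial : EqOn (fun r => ENNReal.ofReal r * (Iio R).indicator (fun r => ENNReal.ofReal r⁻¹) r)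
      ((Iio R).indicator 1) (Ioi 0) := by
    intro r (hr : 0 < r)
    by_cases hrR : r < R
    · simp [hrR, ← ENNReal.ofReal_mul hr.le, hr.ne']
    · simp [hrR]
  rw [← lintegral_indicator measurableSet_ball, ENNReal.ofReal_mul (by positivity)]
  convert h_polar using 1
  · congr with z
    by_cases hz : z ∈ ball c R <;> simp_all [mem_ball, dist_eq_norm]
  · rw [setLIntegral_congr_fun measurableSet_Ioi h_radial, lintegral_indicator_one measurableSet_Iio,
      Measure.restrict_apply measurableSet_Iio, Iio_inter_Ioi, Real.volume_Ioo, sub_zero]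

theorem lintegral_Ioi_div_add_sq {l : ℝ} (hl : 0 < l) :
    ∫⁻ r in Ioi 0, ENNReal.ofReal (l / (r + l) ^ 2) = 1 := by
  have hderiv : ∀ x ∈ Ici (0 : ℝ), HasDerivAt (fun r => -l / (r + l)) (l / (x + l) ^ 2) x := by
    intro x hx
    have hxl : x + l ≠ 0 := by linarith [mem_Ici.mp hx]
    exact ((hasDerivAt_const x (-l)).div ((hasDerivAt_id' x).add_const l) hxl).congr_deriv
      (by ring)
  have hnonneg : ∀ x ∈ Ioi (0 : ℝ), 0 ≤ l / (x + l) ^ 2 := fun x _ => by positivity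
  have hlim : Filter.Tendsto (fun r => -l / (r + l)) Filter.atTop (nhds 0) :=
    (Filter.tendsto_atTop_add_const_right _ l Filter.tendsto_id).const_div_atTop (-l)
  rw [← ofReal_integral_eq_lintegral_ofReal
    (integrableOn_Ioi_deriv_of_nonneg' hderiv hnonneg hlim)
    ((ae_restrict_mem measurableSet_Ioi).mono hnonneg),
    integral_Ioi_of_hasDerivAt_of_nonneg' hderiv hnonneg hlim]
  simp [hl.ne']

theorem lintegral_div_add_sq_mul_norm_sub (c : ℂ) {l : ℝ} (hl : 0 < l) :
    ∫⁻ z, ENNReal.ofReal (l / ((‖z - c‖ + l) ^ 2 * ‖z - c‖)) = ENNReal.ofReal (2 * π) := by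
  have h_radial : EqOn (fun r => ENNReal.ofReal r * ENNReal.ofReal (l / ((r + l) ^ 2 * r)))
      (fun r => ENNReal.ofReal (l / (r + l) ^ 2)) (Ioi 0) := by
    intro r (hr : 0 < r)
    simp only [← ENNReal.ofReal_mul hr.le]
    congr 1
    field_simp
  rw [lintegral_comp_norm_sub (f := fun r => ENNReal.ofReal (l / ((r + l) ^ 2 * r))) (by fun_prop),
    setLIntegral_congr_fun measurableSet_Ioi h_radial, lintegral_Ioi_div_add_sq hl, mul_one]

/-- `|k_w(z)|²` for the normalized Szegő kernel `k_w(z) = √(1 - |w|²) / (1 - w̄ z)`. -/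
noncomputable def carlesonKernel (w z : ℂ) : ℝ :=
  (1 - ‖w‖ ^ 2) / ‖1 - conj w * z‖ ^ 2

noncomputable def diskPoissonKernel (ζ z : ℂ) : ℝ :=
  (1 - ‖z‖ ^ 2) / ‖ζ - z‖ ^ 2

theorem carlesonKernel_nonneg {w : ℂ} (hw : ‖w‖ ≤ 1) (z : ℂ) : 0 ≤ carlesonKernel w z :=
  div_nonneg (by nlinarith [norm_nonneg w]) (sq_nonneg _)

theorem diskPoissonKernel_nonneg (ζ : ℂ) {z : ℂ} (hz : ‖z‖ ≤ 1) : 0 ≤ diskPoissonKernel ζ z :=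
  div_nonneg (by nlinarith [norm_nonneg z]) (sq_nonneg _)

theorem exists_norm_eq_one_conj_mul_eq_norm (w : ℂ) : ∃ a : ℂ, ‖a‖ = 1 ∧ conj w * a = ‖w‖ := by
  set a := Complex.exp (w.arg * Complex.I)
  have ha : ‖a‖ = 1 := Complex.norm_exp_ofReal_mul_I _
  refine ⟨a, ha, ?_⟩
  calc conj w * a = conj ((‖w‖ : ℂ) * a) * a := by rw [Complex.norm_mul_exp_arg_mul_I w]
    _ = ‖w‖ * (conj a * a) := by rw [map_mul, Complex.conj_ofReal, mul_assoc]
    _ = ‖w‖ := by rw [Complex.conj_mul', ha]; simp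

theorem norm_sub_add_one_sub_norm_le_five_mul {w a z : ℂ} (ha : ‖a‖ = 1)
    (hwa : conj w * a = ‖w‖) (hw : ‖w‖ ≤ 1) (hz : ‖z‖ ≤ 1) :
    ‖z - a‖ + (1 - ‖w‖) ≤ 5 * ‖1 - conj w * z‖ := by
  have h_lower : 1 - ‖w‖ ≤ ‖1 - conj w * z‖ := by
    have := norm_sub_norm_le (1 : ℂ) (conj w * z)
    rw [norm_one, norm_mul, Complex.norm_conj] at this
    nlinarith [norm_nonneg w]
  have h_rotated : ‖w‖ * ‖z - a‖ ≤ ‖1 - conj w * z‖ + (1 - ‖w‖) := by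
    have h_eq : conj w * z - ‖w‖ = -(1 - conj w * z) + ((1 - ‖w‖ : ℝ) : ℂ) := by
      push_cast; ring
    calc ‖w‖ * ‖z - a‖ = ‖conj w * z - ‖w‖‖ := by
          rw [← hwa, ← mul_sub, norm_mul, Complex.norm_conj]
      _ ≤ ‖1 - conj w * z‖ + (1 - ‖w‖) := by
          rw [h_eq]
          refine (norm_add_le _ _).trans_eq ?_
          rw [norm_neg, Complex.norm_real, Real.norm_of_nonneg (by linarith)]
  have h_diam : ‖z - a‖ ≤ 2 := (norm_sub_le z a).trans (by linarith)
  nlinarith [norm_nonneg (z - a)]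

theorem carlesonKernel_le {w a z : ℂ} (ha : ‖a‖ = 1) (hwa : conj w * a = ‖w‖) (hw : ‖w‖ < 1)
    (hz : ‖z‖ ≤ 1) :
    carlesonKernel w z ≤ 50 * (1 - ‖w‖) / (‖z - a‖ + (1 - ‖w‖)) ^ 2 := by
  have h_sum_pos : 0 < ‖z - a‖ + (1 - ‖w‖) := by linarith [norm_nonneg (z - a)]
  have h_lower := norm_sub_add_one_sub_norm_le_five_mul ha hwa hw.le hz
  calc carlesonKernel w z
      ≤ 2 * (1 - ‖w‖) / ((‖z - a‖ + (1 - ‖w‖)) / 5) ^ 2 := by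
        unfold carlesonKernel
        gcongr
        · nlinarith [norm_nonneg w]
        · nlinarith [norm_nonneg w]
    _ = 50 * (1 - ‖w‖) / (‖z - a‖ + (1 - ‖w‖)) ^ 2 := by
        field_simp
        ring

theorem diskPoissonKernel_le {ζ z : ℂ} (hζ : ‖ζ‖ = 1) (hz : ‖z‖ ≤ 1) :
    diskPoissonKernel ζ z ≤ 2 / ‖z - ζ‖ := by
  unfold diskPoissonKernel
  rw [norm_sub_rev z ζ]
  rcases (norm_nonneg (ζ - z)).eq_or_lt with h | h
  · simp [← h]
  have h_num : 1 - ‖z‖ ^ 2 ≤ 2 * ‖ζ - z‖ := by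
    have := norm_sub_norm_le ζ z
    nlinarith [norm_nonneg z]
  calc (1 - ‖z‖ ^ 2) / ‖ζ - z‖ ^ 2 ≤ 2 * ‖ζ - z‖ / ‖ζ - z‖ ^ 2 := by gcongr
    _ = 2 / ‖ζ - z‖ := by field_simp

theorem ofReal_carlesonKernel_mul_le {w a ζ z : ℂ} (ha : ‖a‖ = 1)
    (hwa : conj w * a = ‖w‖) (hw : ‖w‖ < 1) (hζ : ‖ζ‖ = 1) (hz : ‖z‖ ≤ 1) :
    ENNReal.ofReal (carlesonKernel w z) * ENNReal.ofReal (diskPoissonKernel ζ z)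
      ≤ ENNReal.ofReal (100 * ((1 - ‖w‖) / ((‖z - a‖ + (1 - ‖w‖)) ^ 2 * ‖z - ζ‖))) := by
  rw [← ENNReal.ofReal_mul (carlesonKernel_nonneg hw.le z)]
  refine ENNReal.ofReal_le_ofReal ?_
  calc _ ≤ 50 * (1 - ‖w‖) / (‖z - a‖ + (1 - ‖w‖)) ^ 2 * (2 / ‖z - ζ‖) :=
        mul_le_mul (carlesonKernel_le ha hwa hw hz) (diskPoissonKernel_le hζ hz)
          (diskPoissonKernel_nonneg ζ hz) (div_nonneg (by linarith) (sq_nonneg _))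
    _ = _ := by simp only [div_eq_mul_inv, mul_inv]; ring

theorem div_add_sq_mul_le_of_lt_half {l r ρ e : ℝ} (hl : 0 < l) (hρ : 0 < ρ) (hρe : ρ < e / 2)
    (he : e ≤ ρ + r) :
    l / ((r + l) ^ 2 * ρ) ≤ (2 * e)⁻¹ * ρ⁻¹ := by
  have he_pos : 0 < e := by linarith
  have h_amgm : 2 * e * l ≤ (r + l) ^ 2 := by nlinarith [sq_nonneg (r - l)]
  calc l / ((r + l) ^ 2 * ρ) ≤ l / (2 * e * l * ρ) := by gcongr
    _ = (2 * e)⁻¹ * ρ⁻¹ := by field_simp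

theorem div_add_sq_mul_le_of_half_le {l r ρ e : ℝ} (hl : 0 ≤ l) (hr : 0 < r) (hρe : e / 2 ≤ ρ)
    (hr' : r ≤ ρ + e) :
    l / ((r + l) ^ 2 * ρ) ≤ 3 * (l / ((r + l) ^ 2 * r)) := by
  calc l / ((r + l) ^ 2 * ρ) ≤ l / ((r + l) ^ 2 * (r / 3)) := by
        gcongr
        linarith
    _ = 3 * (l / ((r + l) ^ 2 * r)) := by field_simp

theorem measurableSet_norm_lt_one : MeasurableSet {z : ℂ | ‖z‖ < 1} :=
  measurableSet_lt measurable_norm measurable_const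

theorem setLIntegral_carlesonKernel_mul_near_le {w a ζ : ℂ} (ha : ‖a‖ = 1)
    (hwa : conj w * a = ‖w‖) (hw : ‖w‖ < 1) (hζ : ‖ζ‖ = 1) :
    ∫⁻ z in {z : ℂ | ‖z‖ < 1} ∩ ball ζ (‖ζ - a‖ / 2),
        ENNReal.ofReal (carlesonKernel w z) * ENNReal.ofReal (diskPoissonKernel ζ z)
      ≤ ENNReal.ofReal (50 * π) := by
  set e := ‖ζ - a‖
  have h_pointwise : ∀ z ∈ {z : ℂ | ‖z‖ < 1} ∩ ball ζ (e / 2),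
      ENNReal.ofReal (carlesonKernel w z) * ENNReal.ofReal (diskPoissonKernel ζ z)
        ≤ ENNReal.ofReal (50 / e) * ENNReal.ofReal ‖z - ζ‖⁻¹ := by
    rintro z ⟨hz : ‖z‖ < 1, hzζ⟩
    rw [mem_ball, dist_eq_norm] at hzζ
    have hρ : 0 < ‖z - ζ‖ := by
      have := norm_sub_norm_le ζ z
      rw [norm_sub_rev] at this
      linarith
    have he : e ≤ ‖z - ζ‖ + ‖z - a‖ := by
      rw [norm_sub_rev z ζ]
      exact norm_sub_le_norm_sub_add_norm_sub ζ z a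
    refine (ofReal_carlesonKernel_mul_le ha hwa hw hζ hz.le).trans ?_
    rw [← ENNReal.ofReal_mul (by positivity)]
    refine ENNReal.ofReal_le_ofReal ?_
    calc _ ≤ 100 * ((2 * e)⁻¹ * ‖z - ζ‖⁻¹) := by
          gcongr
          exact div_add_sq_mul_le_of_lt_half (by linarith) hρ hzζ he
      _ = 50 / e * ‖z - ζ‖⁻¹ := by ring
  calc _ ≤ ∫⁻ z in ball ζ (e / 2), ENNReal.ofReal (50 / e) * ENNReal.ofReal ‖z - ζ‖⁻¹ :=
        (setLIntegral_mono' (measurableSet_norm_lt_one.inter measurableSet_ball)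
          h_pointwise).trans (lintegral_mono_set inter_subset_right)
    _ = ENNReal.ofReal (50 / e * (2 * π * (e / 2))) := by
        rw [lintegral_const_mul' _ _ ENNReal.ofReal_ne_top, lintegral_ball_inv_norm_sub,
          ← ENNReal.ofReal_mul (by positivity)]
    _ ≤ ENNReal.ofReal (50 * π) := by
        refine ENNReal.ofReal_le_ofReal ?_
        rcases eq_or_ne e 0 with he | he
        · simp [he]; positivity
        · exact (by field_simp : 50 / e * (2 * π * (e / 2)) = 50 * π).le

theorem setLIntegral_carlesonKernel_mul_far_le {w a ζ : ℂ} (ha : ‖a‖ = 1)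
    (hwa : conj w * a = ‖w‖) (hw : ‖w‖ < 1) (hζ : ‖ζ‖ = 1) :
    ∫⁻ z in {z : ℂ | ‖z‖ < 1} \ ball ζ (‖ζ - a‖ / 2),
        ENNReal.ofReal (carlesonKernel w z) * ENNReal.ofReal (diskPoissonKernel ζ z)
      ≤ ENNReal.ofReal (600 * π) := by
  set l := 1 - ‖w‖
  have hl : 0 < l := by linarith
  have h_pointwise : ∀ z ∈ {z : ℂ | ‖z‖ < 1} \ ball ζ (‖ζ - a‖ / 2),
      ENNReal.ofReal (carlesonKernel w z) * ENNReal.ofReal (diskPoissonKernel ζ z)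
        ≤ ENNReal.ofReal 300 * ENNReal.ofReal (l / ((‖z - a‖ + l) ^ 2 * ‖z - a‖)) := by
    rintro z ⟨hz : ‖z‖ < 1, hzζ⟩
    rw [mem_ball, dist_eq_norm, not_lt] at hzζ
    have hr : 0 < ‖z - a‖ := by
      have := norm_sub_norm_le a z
      rw [norm_sub_rev] at this
      linarith
    refine (ofReal_carlesonKernel_mul_le ha hwa hw hζ hz.le).trans ?_
    rw [← ENNReal.ofReal_mul (by norm_num)]
    refine ENNReal.ofReal_le_ofReal ?_
    calc _ ≤ 100 * (3 * (l / ((‖z - a‖ + l) ^ 2 * ‖z - a‖))) := by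
          gcongr
          exact div_add_sq_mul_le_of_half_le hl.le hr hzζ (norm_sub_le_norm_sub_add_norm_sub z ζ a)
      _ = 300 * (l / ((‖z - a‖ + l) ^ 2 * ‖z - a‖)) := by ring
  calc _ ≤ ∫⁻ z, ENNReal.ofReal 300 * ENNReal.ofReal (l / ((‖z - a‖ + l) ^ 2 * ‖z - a‖)) :=
        (setLIntegral_mono' (measurableSet_norm_lt_one.diff measurableSet_ball)
          h_pointwise).trans (setLIntegral_le_lintegral _ _)
    _ = ENNReal.ofReal (300 * (2 * π)) := by
        rw [lintegral_const_mul' _ _ ENNReal.ofReal_ne_top, lintegral_div_add_sq_mul_norm_sub a hl,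
          ← ENNReal.ofReal_mul (by norm_num)]
    _ = ENNReal.ofReal (600 * π) := by ring_nf

theorem setLIntegral_carlesonKernel_mul_diskPoissonKernel_le {w ζ : ℂ} (hw : ‖w‖ < 1)
    (hζ : ‖ζ‖ = 1) :
    ∫⁻ z in {z : ℂ | ‖z‖ < 1},
        ENNReal.ofReal (carlesonKernel w z) * ENNReal.ofReal (diskPoissonKernel ζ z)
      ≤ ENNReal.ofReal (650 * π) := by
  obtain ⟨a, ha, hwa⟩ := exists_norm_eq_one_conj_mul_eq_norm w
  rw [← lintegral_inter_add_sdiff _ _ (measurableSet_ball (x := ζ) (ε := ‖ζ - a‖ / 2))]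
  calc _ ≤ ENNReal.ofReal (50 * π) + ENNReal.ofReal (600 * π) :=
        add_le_add (setLIntegral_carlesonKernel_mul_near_le ha hwa hw hζ)
          (setLIntegral_carlesonKernel_mul_far_le ha hwa hw hζ)
    _ = ENNReal.ofReal (650 * π) := by
        rw [← ENNReal.ofReal_add (by positivity) (by positivity)]
        ring_nf

theorem enorm_poissonExt_le (μ : Measure ℂ) {z : ℂ} (hz : ‖z‖ ≤ 1) :
    ‖PoissonExt μ z‖ₑ ≤ ∫⁻ ζ, ENNReal.ofReal (diskPoissonKernel ζ z) ∂μ :=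
  (enorm_integral_le_lintegral_enorm _).trans_eq <| lintegral_congr fun ζ =>
    enorm_eq_ofReal (diskPoissonKernel_nonneg ζ hz)

theorem lintegral_carlesonKernel_mul_poissonExt_le (μ : Measure ℂ) [SFinite μ] (hμ : ∀ᵐ ζ ∂μ, ‖ζ‖ = 1)
    {w : ℂ} (hw : ‖w‖ < 1) :
    ∫⁻ z in {z : ℂ | ‖z‖ < 1}, ENNReal.ofReal ‖carlesonKernel w z * PoissonExt μ z‖
      ≤ ENNReal.ofReal (650 * π) * μ univ := calc
  _ ≤ ∫⁻ z in {z : ℂ | ‖z‖ < 1}, ∫⁻ ζ,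
        ENNReal.ofReal (carlesonKernel w z) * ENNReal.ofReal (diskPoissonKernel ζ z) ∂μ := by
      refine setLIntegral_mono' measurableSet_norm_lt_one fun z hz => ?_
      rw [norm_mul, ENNReal.ofReal_mul (norm_nonneg _),
        Real.norm_of_nonneg (carlesonKernel_nonneg hw.le z), ofReal_norm,
        lintegral_const_mul' _ _ ENNReal.ofReal_ne_top]
      exact mul_le_mul_right (enorm_poissonExt_le μ (le_of_lt hz)) _
  _ = ∫⁻ ζ, (∫⁻ z in {z : ℂ | ‖z‖ < 1},
        ENNReal.ofReal (carlesonKernel w z) * ENNReal.ofReal (diskPoissonKernel ζ z)) ∂μ :=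
      lintegral_lintegral_swap <| Measurable.aemeasurable <| by
        unfold carlesonKernel diskPoissonKernel
        fun_prop
  _ ≤ ∫⁻ _, ENNReal.ofReal (650 * π) ∂μ :=
      lintegral_mono_ae (hμ.mono fun ζ hζ =>
        setLIntegral_carlesonKernel_mul_diskPoissonKernel_le hw hζ)
  _ = ENNReal.ofReal (650 * π) * μ univ := lintegral_const _

theorem poisson_carleson :
    ∃ C : ℝ, 0 < C ∧ ∀ (μ : Measure ℂ), IsFiniteMeasure μ →
      (∀ᵐ ζ ∂μ, ‖ζ‖ = 1) →
      ∀ w : ℂ, ‖w‖ < 1 →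
        (∫ z in {z : ℂ | ‖z‖ < 1},
            (1 - ‖w‖ ^ 2) / ‖1 - (starRingEnd ℂ) w * z‖ ^ 2
              * PoissonExt μ z)
          ≤ C * (μ Set.univ).toReal := by
  refine ⟨650 * π, by positivity, fun μ _ hμ w hw => ?_⟩
  calc _ ≤ ‖∫ z in {z : ℂ | ‖z‖ < 1}, carlesonKernel w z * PoissonExt μ z‖ := le_norm_self _
    _ ≤ _ := norm_integral_le_lintegral_norm _
    _ ≤ (ENNReal.ofReal (650 * π) * μ univ).toReal :=
        ENNReal.toReal_mono (ENNReal.mul_ne_top ENNReal.ofReal_ne_top (measure_ne_top μ _))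
          (lintegral_carlesonKernel_mul_poissonExt_le μ hμ hw)
    _ = 650 * π * (μ univ).toReal := by
        rw [ENNReal.toReal_mul, ENNReal.toReal_ofReal (by positivity)]
end

section
/- Let T be a bounded m-isometry on a complex Hilbert space H with a unit vector e ∈ ker T*, and suppose there is c > 0 with ‖Tx‖ ≥ c‖x‖ for all x ∈ H. Then for every analytic polynomial f(z) = ∑_{k=0}^{N} a_k z^k, ‖f(T)e‖² ≥ ∑_{k=0}^{N} c^{2k} |a_k|², where f(T) = ∑_k a_k T^k. -/
open ContinuousLinearMap

variable {H : Type*} [NormedAddCommGroup H] [InnerProductSpace ℂ H] [CompleteSpace H]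

/-!
Write `f(T)e = T w + a₀ e` with `w = ∑ₖ a_{k+1} Tᵏ e`. Since `e ⟂ range T`, Pythagoras gives
`‖f(T)e‖² = ‖T w‖² + |a₀|² ≥ c² ‖w‖² + |a₀|²`, and induction on the degree bounds `‖w‖²`
by `∑ₖ c^{2k} |a_{k+1}|²`.
-/

lemma sum_range_succ_smul_pow_apply {𝕜 E : Type*} [NormedField 𝕜] [NormedAddCommGroup E]
    [NormedSpace 𝕜 E] (T : E →L[𝕜] E) (a : ℕ → 𝕜) (x : E) (n : ℕ) :
    ∑ k ∈ Finset.range (n + 1), a k • (T ^ k) x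
      = T (∑ k ∈ Finset.range n, a (k + 1) • (T ^ k) x) + a 0 • x := by
  simp only [Finset.sum_range_succ', pow_zero, pow_succ', one_apply_eq_self,
    mul_apply_eq_comp, map_sum, map_smul]

section

variable {𝕜 E : Type*} [RCLike 𝕜] [NormedAddCommGroup E] [InnerProductSpace 𝕜 E]

lemma norm_apply_add_sq_of_mem_orthogonal_range (T : E →L[𝕜] E) {z : E}
    (hz : z ∈ T.rangeᗮ) (y : E) :
    ‖T y + z‖ ^ 2 = ‖T y‖ ^ 2 + ‖z‖ ^ 2 := by
  simp only [sq]
  exact norm_add_sq_eq_norm_sq_add_norm_sq_of_inner_eq_zero _ _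
    ((Submodule.mem_orthogonal _ _).mp hz _ (LinearMap.mem_range_self _ y))

theorem sum_pow_mul_norm_sq_mul_norm_sq_le_norm_sum_smul_pow_apply_sq (T : E →L[𝕜] E) {e : E}
    (he : e ∈ T.rangeᗮ) {c : ℝ} (hc : 0 ≤ c) (hlb : ∀ x : E, c * ‖x‖ ≤ ‖T x‖)
    (N : ℕ) (a : ℕ → 𝕜) :
    (∑ k ∈ Finset.range N, c ^ (2 * k) * ‖a k‖ ^ 2) * ‖e‖ ^ 2
      ≤ ‖∑ k ∈ Finset.range N, a k • (T ^ k) e‖ ^ 2 := by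
  induction N generalizing a with
  | zero => simp
  | succ N ih =>
    set w := ∑ k ∈ Finset.range N, a (k + 1) • (T ^ k) e
    have hcoeff : ∑ k ∈ Finset.range (N + 1), c ^ (2 * k) * ‖a k‖ ^ 2
        = c ^ 2 * ∑ k ∈ Finset.range N, c ^ (2 * k) * ‖a (k + 1)‖ ^ 2 + ‖a 0‖ ^ 2 := by
      simp only [Finset.sum_range_succ', Finset.mul_sum, mul_add, pow_add, mul_one, pow_zero,
        mul_zero, one_mul]
      ring_nf
    have hTw : c ^ 2 * ‖w‖ ^ 2 ≤ ‖T w‖ ^ 2 := by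
      rw [← mul_pow]
      exact pow_le_pow_left₀ (by positivity) (hlb w) 2
    calc (∑ k ∈ Finset.range (N + 1), c ^ (2 * k) * ‖a k‖ ^ 2) * ‖e‖ ^ 2
        = c ^ 2 * ((∑ k ∈ Finset.range N, c ^ (2 * k) * ‖a (k + 1)‖ ^ 2) * ‖e‖ ^ 2)
            + ‖a 0 • e‖ ^ 2 := by rw [hcoeff, norm_smul]; ring
      _ ≤ c ^ 2 * ‖w‖ ^ 2 + ‖a 0 • e‖ ^ 2 := by gcongr; exact ih _
      _ ≤ ‖T w‖ ^ 2 + ‖a 0 • e‖ ^ 2 := by gcongr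
      _ = ‖∑ k ∈ Finset.range (N + 1), a k • (T ^ k) e‖ ^ 2 := by
        rw [sum_range_succ_smul_pow_apply,
          norm_apply_add_sq_of_mem_orthogonal_range T (Submodule.smul_mem _ _ he)]

end

theorem lower_bound_functional_calculus_general (T : H →L[ℂ] H)
    (e : H) (he : ‖e‖ = 1) (hker : (ContinuousLinearMap.adjoint T) e = 0)
    (c : ℝ) (hc : 0 < c) (hlb : ∀ x : H, c * ‖x‖ ≤ ‖T x‖)
    (N : ℕ) (a : ℕ → ℂ) :
    ∑ k ∈ Finset.range (N + 1), c ^ (2 * k) * ‖a k‖ ^ 2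
      ≤ ‖∑ k ∈ Finset.range (N + 1), a k • (T ^ k) e‖ ^ 2 := by
  have he_perp : e ∈ T.rangeᗮ := by
    rw [orthogonal_range]
    exact hker
  simpa [he] using
    sum_pow_mul_norm_sq_mul_norm_sq_le_norm_sum_smul_pow_apply_sq T he_perp hc.le hlb (N + 1) a

theorem lower_bound_functional_calculus (T : H →L[ℂ] H) (m : ℕ) (hT : beta T m = 0)
    (e : H) (he : ‖e‖ = 1) (hker : (ContinuousLinearMap.adjoint T) e = 0)
    (c : ℝ) (hc : 0 < c) (hlb : ∀ x : H, c * ‖x‖ ≤ ‖T x‖)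
    (N : ℕ) (a : ℕ → ℂ) :
    ∑ k ∈ Finset.range (N + 1), c ^ (2 * k) * ‖a k‖ ^ 2
      ≤ ‖∑ k ∈ Finset.range (N + 1), a k • (T ^ k) e‖ ^ 2 :=
  lower_bound_functional_calculus_general T e he hker c hc hlb N a
end
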